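/- Let y, z ∈ PL₊(J) both lie strictly below the diagonal on the interior of the compact interval J, let g ∈ PL₊(J), and let n be a positive integer. Then g⁻¹ y g = z if and only if g⁻¹ yⁿ g = zⁿ. -/

import Mathlib

/-!
The forward direction is iteration. For the converse, let `c` be the infimum of the points of
`J` where `g ∘ z` and `y ∘ g` differ. Right germs of PL maps are affine with positive slope, and
composition multiplies slopes. If `c = η`, all maps fix `η`, and with `α, β, γ` the right slopes
of `z, y, g` there, `g ∘ zⁿ = yⁿ ∘ g` gives `γ αⁿ = βⁿ γ`, so `α = β`. If `c > η`, the relation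
already holds on `[η, c)`, which contains `z c` together with its `z`-orbit; hence
`g ∘ zⁿ⁻¹ = yⁿ⁻¹ ∘ g` near `z c`, and comparing this with `g ∘ zⁿ = yⁿ⁻¹ ∘ (y ∘ g)` at `c`
cancels the slope of `yⁿ⁻¹`, while injectivity of `yⁿ⁻¹` gives `g (z c) = y (g c)`. In both
cases `g ∘ z` and `y ∘ g` have the same value and slope at `c`, so they agree on a right
neighbourhood of `c`, contradicting its choice.
-/

/-- An orientation-preserving piecewise-linear homeomorphism of the compact interval
[η, ζ] with finitely many breakpoints (an element of PL₊([η,ζ])). -/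
def PLHomeoOn (η ζ : ℝ) (f : ℝ → ℝ) : Prop :=
  f η = η ∧ f ζ = ζ ∧ StrictMonoOn f (Set.Icc η ζ) ∧
  ∃ (n : ℕ) (x : Fin (n + 1) → ℝ), StrictMono x ∧ x 0 = η ∧ x (Fin.last n) = ζ ∧
    ∀ i : Fin n, ∃ a b : ℝ, 0 < a ∧
      ∀ t ∈ Set.Icc (x i.castSucc) (x i.succ), f t = a * t + b

open Set Filter Topology

theorem Fin.exists_castSucc_le_lt_succ {α : Type*} [LinearOrder α] :
    ∀ {m : ℕ} (x : Fin (m + 1) → α) {c : α}, x 0 ≤ c → c < x (Fin.last m) →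
      ∃ i : Fin m, x i.castSucc ≤ c ∧ c < x i.succ
  | 0, _, _, h0, hl => absurd h0 (not_le.2 hl)
  | m + 1, x, c, h0, hl => by
    by_cases hm : x (Fin.last m).castSucc ≤ c
    · exact ⟨Fin.last m, hm, hl⟩
    · obtain ⟨i, hi, hci⟩ := exists_castSucc_le_lt_succ (x ∘ Fin.castSucc) h0 (not_le.1 hm)
      exact ⟨i.castSucc, hi, by rwa [Fin.succ_castSucc]⟩

theorem Icc_subset_of_forall_Ico_subset_imp_mem_nhdsGE {α : Type*}
    [ConditionallyCompleteLinearOrder α] [TopologicalSpace α] [OrderTopology α]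
    {a b : α} {s : Set α} (hb : b ∈ s) (h : ∀ c ∈ Ico a b, Ico a c ⊆ s → s ∈ 𝓝[≥] c) :
    Icc a b ⊆ s := by
  by_contra hsub
  set S := Icc a b \ s
  have hS : S.Nonempty := not_subset.1 hsub
  have hcS : ∀ x ∈ S, sInf S ≤ x := fun x hx => csInf_le ⟨a, fun y hy => hy.1.1⟩ hx
  have hac : a ≤ sInf S := le_csInf hS fun x hx => hx.1.1
  have hcb : sInf S < b := by
    obtain ⟨x, hx, hxs⟩ := hS
    refine (hcS x ⟨hx, hxs⟩ |>.trans hx.2).lt_of_ne fun hcb => hxs ?_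
    rwa [le_antisymm hx.2 (hcb ▸ hcS x ⟨hx, hxs⟩)]
  have hbelow : Ico a (sInf S) ⊆ s := fun x hx => by
    by_contra hxs
    exact (hcS x ⟨⟨hx.1, hx.2.le.trans hcb.le⟩, hxs⟩).not_gt hx.2
  obtain ⟨u, hcu, hu⟩ :=
    (mem_nhdsGE_iff_exists_Ico_subset' hcb).1 (h _ ⟨hac, hcb⟩ hbelow)
  refine (le_csInf hS fun x hx => ?_).not_gt hcu
  by_contra hxu
  exact hx.2 (hu ⟨hcS x hx, not_le.1 hxu⟩)

theorem Set.EqOn.comp_iterate {α β : Type*} {s : Set α} {f : α → β} {fa : α → α} {fb : β → β}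
    (h : EqOn (f ∘ fa) (fb ∘ f) s) (hs : MapsTo fa s s) (n : ℕ) :
    EqOn (f ∘ fa^[n]) (fb^[n] ∘ f) s := by
  induction n with
  | zero => exact fun _ _ => rfl
  | succ n ih =>
    intro t ht
    have hn : f (fa^[n] t) = fb^[n] (f t) := ih ht
    simp only [Function.comp_apply, Function.iterate_succ_apply', ← hn]
    exact h (hs.iterate n ht)

def HasRightSlope (f : ℝ → ℝ) (c a : ℝ) : Prop :=
  ∀ᶠ t in 𝓝[≥] c, f t = f c + a * (t - c)

namespace HasRightSlope

variable {f g : ℝ → ℝ} {c a b : ℝ}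

theorem tendsto (hf : HasRightSlope f c a) (ha : 0 ≤ a) :
    Tendsto f (𝓝[≥] c) (𝓝[≥] (f c)) := by
  have hlin : Tendsto (fun t => f c + a * (t - c)) (𝓝[≥] c) (𝓝[≥] (f c)) := by
    refine tendsto_nhdsWithin_of_tendsto_nhds_of_eventually_within _ ?_ ?_
    · have : Continuous fun t => f c + a * (t - c) := by fun_prop
      simpa using (this.tendsto c).mono_left nhdsWithin_le_nhds
    · filter_upwards [self_mem_nhdsWithin] with t ht
      exact le_add_of_nonneg_right (mul_nonneg ha (sub_nonneg.2 ht))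
  exact hlin.congr' (hf.mono fun t ht => ht.symm)

theorem comp (hg : HasRightSlope g (f c) b) (hf : HasRightSlope f c a) (ha : 0 ≤ a) :
    HasRightSlope (g ∘ f) c (b * a) := by
  filter_upwards [hf, hf.tendsto ha hg] with t hft hgt
  simp only [Function.comp_apply]
  rw [hgt, hft]
  ring

theorem iterate_of_fixed (hf : HasRightSlope f c a) (ha : 0 ≤ a) (hc : f c = c) (n : ℕ) :
    HasRightSlope f^[n] c (a ^ n) := by
  induction n with
  | zero => exact Eventually.of_forall fun t => by simp
  | succ n ih =>
    rw [Function.iterate_succ, pow_succ]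
    exact (hc.symm ▸ ih).comp hf ha

theorem unique (ha : HasRightSlope f c a) (hb : HasRightSlope f c b) : a = b := by
  obtain ⟨t, ⟨hat, hbt⟩, hct : c < t⟩ :=
    (((ha.and hb).filter_mono (nhdsWithin_mono c Ioi_subset_Ici_self)).and
      self_mem_nhdsWithin).exists
  have : (a - b) * (t - c) = 0 := by linear_combination hbt - hat
  simpa [sub_eq_zero, hct.ne'] using this

theorem congr (hf : HasRightSlope f c a) (h : f =ᶠ[𝓝[≥] c] g) : HasRightSlope g c a := by
  filter_upwards [hf, h] with t hft ht
  rw [← ht, ← h.eq_of_nhdsWithin self_mem_Ici, hft]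

theorem eventuallyEq (hf : HasRightSlope f c a) (hg : HasRightSlope g c a) (hc : f c = g c) :
    f =ᶠ[𝓝[≥] c] g := by
  filter_upwards [hf, hg] with t hft hgt
  rw [hft, hgt, hc]

end HasRightSlope

section Conjugacy

variable {y z g : ℝ → ℝ}

theorem HasRightSlope.eventuallyEq_comp_of_fixed {p α β γ : ℝ} {n : ℕ} (hn : n ≠ 0)
    (hzp : z p = p) (hyp : y (g p) = g p)
    (hz : HasRightSlope z p α) (hα : 0 ≤ α) (hy : HasRightSlope y (g p) β) (hβ : 0 ≤ β)
    (hg : HasRightSlope g p γ) (hγ : 0 < γ) (h : g ∘ z^[n] =ᶠ[𝓝[≥] p] y^[n] ∘ g) :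
    g ∘ z =ᶠ[𝓝[≥] p] y ∘ g := by
  have hgz : HasRightSlope g (z p) γ := hzp.symm ▸ hg
  have hgzn : HasRightSlope (g ∘ z^[n]) p (γ * α ^ n) :=
    (Function.iterate_fixed hzp n ▸ hg).comp (hz.iterate_of_fixed hα hzp n) (pow_nonneg hα n)
  have hslope : γ * α ^ n = β ^ n * γ :=
    (hgzn.congr h).unique ((hy.iterate_of_fixed hβ hyp n).comp hg hγ.le)
  have hαβ : α = β :=
    (pow_left_inj₀ hα hβ hn).1 (mul_left_cancel₀ hγ.ne' (hslope.trans (mul_comm _ _)))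
  have hyg : HasRightSlope (y ∘ g) p (γ * α) := by
    rw [hαβ, mul_comm]
    exact hy.comp hg hγ.le
  refine (hgz.comp hz hα).eventuallyEq hyg ?_
  simp only [Function.comp_apply, hzp, hyp]

theorem HasRightSlope.eventuallyEq_comp_of_iterate {c α β γc γd B : ℝ} {n : ℕ}
    (hz : HasRightSlope z c α) (hα : 0 ≤ α) (hgc : HasRightSlope g c γc) (hγc : 0 ≤ γc)
    (hgd : HasRightSlope g (z c) γd) (hγd : 0 ≤ γd) (hy : HasRightSlope y (g c) β)
    (hβ : 0 ≤ β) (hyn : HasRightSlope y^[n] (y (g c)) B) (hB : B ≠ 0)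
    (hzc : g (z c) = y (g c)) (hd : g ∘ z^[n] =ᶠ[𝓝[≥] z c] y^[n] ∘ g)
    (hc : g ∘ z^[n + 1] =ᶠ[𝓝[≥] c] y^[n + 1] ∘ g) :
    g ∘ z =ᶠ[𝓝[≥] c] y ∘ g := by
  have hleft : HasRightSlope (g ∘ z^[n + 1]) c (B * γd * α) := by
    rw [Function.iterate_succ]
    exact (((hzc ▸ hyn).comp hgd hγd).congr hd.symm).comp hz hα
  have hright : HasRightSlope (y^[n + 1] ∘ g) c (B * (β * γc)) := by
    rw [Function.iterate_succ]
    exact HasRightSlope.comp (f := y ∘ g) hyn (hy.comp hgc hγc) (mul_nonneg hβ hγc)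
  have hslope : γd * α = β * γc :=
    mul_left_cancel₀ hB ((mul_assoc B γd α).symm.trans ((hleft.congr hc).unique hright))
  exact (hgd.comp hz hα).eventuallyEq (hslope ▸ hy.comp hgc hγc) hzc

end Conjugacy

namespace PLHomeoOn

variable {η ζ : ℝ} {f : ℝ → ℝ}

theorem mapsTo (hf : PLHomeoOn η ζ f) : MapsTo f (Icc η ζ) (Icc η ζ) := fun t ht => by
  obtain ⟨hη, hζ, hmono, -⟩ := hf
  have hηζ : η ≤ ζ := ht.1.trans ht.2
  exact ⟨hη ▸ hmono.monotoneOn (left_mem_Icc.2 hηζ) ht ht.1,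
    hζ ▸ hmono.monotoneOn ht (right_mem_Icc.2 hηζ) ht.2⟩

theorem mapsTo_Ico (hf : PLHomeoOn η ζ f) : MapsTo f (Ico η ζ) (Ico η ζ) := fun _ ht =>
  ⟨(hf.mapsTo (Ico_subset_Icc_self ht)).1,
    hf.2.1 ▸ hf.2.2.1 (Ico_subset_Icc_self ht) (right_mem_Icc.2 (ht.1.trans ht.2.le)) ht.2⟩

theorem mapsTo_Ico_of_lt_self (hf : PLHomeoOn η ζ f) (hb : ∀ t ∈ Ioo η ζ, f t < t) {c : ℝ}
    (hc : c ≤ ζ) : MapsTo f (Ico η c) (Ico η c) := fun t ht => by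
  refine ⟨(hf.mapsTo ⟨ht.1, ht.2.le.trans hc⟩).1, ?_⟩
  rcases ht.1.eq_or_lt with hηt | hηt
  · rw [← hηt] at ht ⊢
    rw [hf.1]
    exact ht.2
  · exact (hb t ⟨hηt, ht.2.trans_le hc⟩).trans ht.2

theorem injOn (hf : PLHomeoOn η ζ f) : InjOn f (Icc η ζ) := hf.2.2.1.injOn

theorem hasRightSlope (hf : PLHomeoOn η ζ f) {c : ℝ} (hc : c ∈ Ico η ζ) :
    ∃ a, 0 < a ∧ HasRightSlope f c a := by
  obtain ⟨-, -, -, m, x, -, hx0, hxm, hpiece⟩ := hf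
  obtain ⟨i, hic, hci⟩ := Fin.exists_castSucc_le_lt_succ x (hx0 ▸ hc.1) (hxm ▸ hc.2)
  obtain ⟨a, b, ha, hab⟩ := hpiece i
  refine ⟨a, ha, ?_⟩
  filter_upwards [Icc_mem_nhdsGE hci] with t ht
  rw [hab t ⟨hic.trans ht.1, ht.2⟩, hab c ⟨hic, hci.le⟩]
  ring

theorem iterate_hasRightSlope (hf : PLHomeoOn η ζ f) (n : ℕ) {c : ℝ} (hc : c ∈ Ico η ζ) :
    ∃ a, 0 < a ∧ HasRightSlope f^[n] c a := by
  induction n generalizing c with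
  | zero => exact ⟨1, one_pos, Eventually.of_forall fun _ => by simp⟩
  | succ n ih =>
    obtain ⟨a, ha, hfa⟩ := hf.hasRightSlope hc
    obtain ⟨b, hb, hfb⟩ := ih (hf.mapsTo_Ico hc)
    exact ⟨b * a, mul_pos hb ha, by rw [Function.iterate_succ]; exact hfb.comp hfa ha.le⟩

variable {y z g : ℝ → ℝ}

theorem eventuallyEq_comp_of_eqOn_iterate (hy : PLHomeoOn η ζ y) (hz : PLHomeoOn η ζ z)
    (hg : PLHomeoOn η ζ g) (hbz : ∀ t ∈ Ioo η ζ, z t < t) {n : ℕ} (hn : n ≠ 0)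
    (H : EqOn (g ∘ z^[n]) (y^[n] ∘ g) (Icc η ζ)) {c : ℝ} (hc : c ∈ Ico η ζ)
    (hbelow : EqOn (g ∘ z) (y ∘ g) (Ico η c)) :
    g ∘ z =ᶠ[𝓝[≥] c] y ∘ g := by
  have hcIcc : c ∈ Icc η ζ := Ico_subset_Icc_self hc
  have hH : g ∘ z^[n] =ᶠ[𝓝[≥] c] y^[n] ∘ g := eventuallyEq_of_mem (Icc_mem_nhdsGE_of_mem hc) H
  obtain ⟨α, hα, hzα⟩ := hz.hasRightSlope hc
  obtain ⟨γc, hγc, hgγc⟩ := hg.hasRightSlope hc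
  obtain ⟨β, hβ, hyβ⟩ := hy.hasRightSlope (hg.mapsTo_Ico hc)
  rcases hc.1.eq_or_lt with rfl | hηc
  · exact HasRightSlope.eventuallyEq_comp_of_fixed hn hz.1 (by rw [hg.1, hy.1]) hzα hα.le
      (hg.1 ▸ hyβ) hβ.le hgγc hγc hH
  obtain ⟨m, rfl⟩ := Nat.exists_eq_add_one_of_ne_zero hn
  have hzc : z c ∈ Ico η c := ⟨(hz.mapsTo hcIcc).1, hbz c ⟨hηc, hc.2⟩⟩
  have hd : g ∘ z^[m] =ᶠ[𝓝[≥] z c] y^[m] ∘ g := eventuallyEq_of_mem (Ico_mem_nhdsGE_of_mem hzc)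
    (hbelow.comp_iterate (hz.mapsTo_Ico_of_lt_self hbz hc.2.le) m)
  have hgzc : g (z c) = y (g c) := by
    refine (hy.injOn.iterate hy.mapsTo m) (hg.mapsTo (hz.mapsTo hcIcc))
      (hy.mapsTo (hg.mapsTo hcIcc)) ?_
    calc y^[m] (g (z c)) = g (z^[m] (z c)) := (hd.eq_of_nhdsWithin self_mem_Ici).symm
      _ = y^[m] (y (g c)) := H hcIcc
  obtain ⟨γd, hγd, hgγd⟩ := hg.hasRightSlope (hz.mapsTo_Ico hc)
  obtain ⟨B, hB, hyB⟩ := hy.iterate_hasRightSlope m (hy.mapsTo_Ico (hg.mapsTo_Ico hc))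
  exact hzα.eventuallyEq_comp_of_iterate hα.le hgγc hγc.le hgγd hγd.le hyβ hβ.le hyB hB.ne'
    hgzc hd hH

end PLHomeoOn

theorem stmt14_general (η ζ : ℝ) (y z g : ℝ → ℝ)
    (hy : PLHomeoOn η ζ y) (hz : PLHomeoOn η ζ z) (hg : PLHomeoOn η ζ g)
    (hbz : ∀ t ∈ Set.Ioo η ζ, z t < t)
    (n : ℕ) (hn : 0 < n) :
    (∀ t ∈ Set.Icc η ζ, g (z t) = y (g t)) ↔
      (∀ t ∈ Set.Icc η ζ, g (z^[n] t) = y^[n] (g t)) := by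
  refine ⟨fun h t ht => EqOn.comp_iterate (fun t ht => h t ht) hz.mapsTo n ht, fun H => ?_⟩
  have hζ : g (z ζ) = y (g ζ) := by rw [hz.2.1, hg.2.1, hy.2.1]
  have hsub := Icc_subset_of_forall_Ico_subset_imp_mem_nhdsGE (s := {t | g (z t) = y (g t)})
    hζ fun c hc hbelow =>
    hy.eventuallyEq_comp_of_eqOn_iterate hz hg hbz hn.ne' (fun t ht => H t ht) hc
      fun t ht => hbelow ht
  exact fun t ht => hsub ht

/-- For y, z ∈ PL₊(J) strictly below the diagonal on the interior, g ∈ PL₊(J), and a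
positive integer n: g conjugates z to y iff g conjugates zⁿ to yⁿ. -/
theorem stmt14 (η ζ : ℝ) (hηζ : η < ζ) (y z g : ℝ → ℝ)
    (hy : PLHomeoOn η ζ y) (hz : PLHomeoOn η ζ z) (hg : PLHomeoOn η ζ g)
    (hby : ∀ t ∈ Set.Ioo η ζ, y t < t) (hbz : ∀ t ∈ Set.Ioo η ζ, z t < t)
    (n : ℕ) (hn : 0 < n) :
    (∀ t ∈ Set.Icc η ζ, g (z t) = y (g t)) ↔
      (∀ t ∈ Set.Icc η ζ, g (z^[n] t) = y^[n] (g t)) :=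
  stmt14_general η ζ y z g hy hz hg hbz n hn
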